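/- Let (A, μ, α) be a multiplicative Hom-alternative algebra over a field K of characteristic zero, i.e., μ(α(x), μ(x,y)) = μ(μ(x,x), α(y)), μ(α(x), μ(y,y)) = μ(μ(x,y), α(y)) and α(μ(x,y)) = μ(α(x), α(y)) for all x, y ∈ A. Define the commutator bracket [x,y] = μ(x,y) − μ(y,x). Then (A, [·,·], α) is a Hom-Malcev algebra: the bracket is skew-symmetric, bilinear, and satisfies J_α(α(x), α(y), [x,z]) = [J_α(x,y,z), α²(x)] for all x, y, z ∈ A, where J_α(x,y,z) = [[x,y], α(z)] + [[y,z], α(x)] + [[z,x], α(y)]. -/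

import Mathlib

/-!
In a Hom-alternative algebra the Hom-associator `as` is alternating, so the Hom-Jacobiator of the
commutator bracket, being the alternating sum of `as` over the six permutations of its arguments,
is `6 • as`. The Hom-Malcev identity thus reduces to `as (α x) (α y) [x, z] = [as x y z, α² x]`,
the difference of the Hom-versions of the alternative-algebra identities `(x, y, xz) = (x, y, z)x`
and `(x, y, zx) = x(x, y, z)`. Each of these follows from two instances of the Hom-Teichmüller
identity, which holds in every multiplicative Hom-algebra.
-/

section

variable {R A : Type*} [CommSemiring R] [AddCommGroup A] [Module R A]

def homJacobiator (br : A →ₗ[R] A →ₗ[R] A) (α : A →ₗ[R] A) (x y z : A) : A :=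
  br (br x y) (α z) + br (br y z) (α x) + br (br z x) (α y)

def IsHomMalcev (br : A →ₗ[R] A →ₗ[R] A) (α : A →ₗ[R] A) : Prop :=
  (∀ x y, br x y = -br y x) ∧
    ∀ x y z, homJacobiator br α (α x) (α y) (br x z) = br (homJacobiator br α x y z) (α (α x))

variable (μ : A →ₗ[R] A →ₗ[R] A) (α : A →ₗ[R] A)

def homAssociator (x y z : A) : A := μ (μ x y) (α z) - μ (α x) (μ y z)

def commutatorBracket : A →ₗ[R] A →ₗ[R] A := μ - μ.flip

theorem homAssociator_swap_left (hleft : ∀ x y, homAssociator μ α x x y = 0) (x y z : A) :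
    homAssociator μ α y x z = -homAssociator μ α x y z := by
  linear_combination (norm := (simp only [homAssociator, map_add, LinearMap.add_apply]; module))
    hleft (x + y) z - hleft x z - hleft y z

theorem homAssociator_swap_right (hright : ∀ x y, homAssociator μ α x y y = 0) (x y z : A) :
    homAssociator μ α x z y = -homAssociator μ α x y z := by
  linear_combination (norm := (simp only [homAssociator, map_add, LinearMap.add_apply]; module))
    hright x (y + z) - hright x y - hright x z

theorem homAssociator_teichmuller (hmult : ∀ x y, α (μ x y) = μ (α x) (α y)) (w x y z : A) :
    homAssociator μ α (μ w x) (α y) (α z) - homAssociator μ α (α w) (μ x y) (α z)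
      + homAssociator μ α (α w) (α x) (μ y z)
      = μ (α (α w)) (homAssociator μ α x y z) + μ (homAssociator μ α w x y) (α (α z)) := by
  simp only [homAssociator, hmult, map_sub, LinearMap.sub_apply]
  abel

theorem homJacobiator_commutatorBracket (x y z : A) :
    homJacobiator (commutatorBracket μ) α x y z
      = homAssociator μ α x y z - homAssociator μ α y x z + homAssociator μ α y z x
        - homAssociator μ α z y x + homAssociator μ α z x y - homAssociator μ α x z y := by
  simp only [homJacobiator, homAssociator, commutatorBracket, LinearMap.sub_apply,
    LinearMap.flip_apply, map_sub]
  abel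

variable {μ α}

section Alternative

variable (hleft : ∀ x y, homAssociator μ α x x y = 0) (hright : ∀ x y, homAssociator μ α x y y = 0)
include hleft hright

theorem homAssociator_cycle (x y z : A) :
    homAssociator μ α y z x = homAssociator μ α x y z := by
  rw [homAssociator_swap_right μ α hright, homAssociator_swap_left μ α hleft, neg_neg]

theorem homJacobiator_commutatorBracket_eq_six_smul (x y z : A) :
    homJacobiator (commutatorBracket μ) α x y z = 6 • homAssociator μ α x y z := by
  rw [homJacobiator_commutatorBracket]
  linear_combination (norm := module) -homAssociator_swap_left μ α hleft x y z
    + 3 • homAssociator_cycle hleft hright x y z - homAssociator_swap_left μ α hleft y z x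
    + homAssociator_cycle hleft hright y z x - homAssociator_swap_right μ α hright x y z

variable (hmult : ∀ x y, α (μ x y) = μ (α x) (α y))
include hmult

theorem homAssociator_map_map_mul_left (x y z : A) :
    homAssociator μ α (α x) (α y) (μ x z) = μ (homAssociator μ α x y z) (α (α x)) := by
  have h₁ := homAssociator_teichmuller μ α hmult y x x z
  have h₂ := homAssociator_teichmuller μ α hmult z y x x
  simp only [hleft, hright, map_zero, LinearMap.zero_apply, add_zero, zero_add] at h₁ h₂
  rw [homAssociator_swap_left μ α hleft y z x, homAssociator_cycle hleft hright x y z, map_neg,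
    LinearMap.neg_apply] at h₂
  linear_combination (norm := module) -h₁ - h₂
    + homAssociator_cycle hleft hright (α z) (μ y x) (α x)
    - homAssociator_cycle hleft hright (α z) (α y) (μ x x)
    + homAssociator_swap_left μ α hleft (α x) (α y) (μ x z)

theorem homAssociator_map_map_mul_right (x y z : A) :
    homAssociator μ α (α x) (α y) (μ z x) = μ (α (α x)) (homAssociator μ α x y z) := by
  have h₁ := homAssociator_teichmuller μ α hmult x x y z
  have h₂ := homAssociator_teichmuller μ α hmult z x x y
  simp only [hleft, hright, map_zero, LinearMap.zero_apply, add_zero] at h₁ h₂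
  linear_combination (norm := module) h₁ + h₂
    + homAssociator_cycle hleft hright (μ z x) (α x) (α y)
    - homAssociator_cycle hleft hright (α z) (μ x x) (α y)
    + homAssociator_cycle hleft hright (α z) (α x) (μ x y)

theorem homAssociator_map_map_commutatorBracket (x y z : A) :
    homAssociator μ α (α x) (α y) (commutatorBracket μ x z)
      = commutatorBracket μ (homAssociator μ α x y z) (α (α x)) := by
  simp only [commutatorBracket, LinearMap.sub_apply, LinearMap.flip_apply]
  rw [← homAssociator_map_map_mul_left hleft hright hmult,
    ← homAssociator_map_map_mul_right hleft hright hmult]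
  simp only [homAssociator, map_sub]
  abel

theorem isHomMalcev_commutatorBracket : IsHomMalcev (commutatorBracket μ) α := by
  refine ⟨fun x y ↦ ?_, fun x y z ↦ ?_⟩
  · simp only [commutatorBracket, LinearMap.sub_apply, LinearMap.flip_apply, neg_sub]
  · simp only [homJacobiator_commutatorBracket_eq_six_smul hleft hright,
      homAssociator_map_map_commutatorBracket hleft hright hmult, map_nsmul, LinearMap.smul_apply]

end Alternative

end

theorem commutator_of_hom_alternative_is_hom_malcev_general
    {K : Type*} [Field K] {A : Type*} [AddCommGroup A] [Module K A]
    (μ : A →ₗ[K] A →ₗ[K] A) (α : A →ₗ[K] A)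
    (hleft : ∀ x y : A, μ (α x) (μ x y) = μ (μ x x) (α y))
    (hright : ∀ x y : A, μ (α x) (μ y y) = μ (μ x y) (α y))
    (hmult : ∀ x y : A, α (μ x y) = μ (α x) (α y))
    (br : A → A → A) (hbr : ∀ x y : A, br x y = μ x y - μ y x)
    (J : A → A → A → A)
    (hJ : ∀ x y z : A, J x y z = br (br x y) (α z) + br (br y z) (α x) + br (br z x) (α y)) :
    (∀ x y : A, br x y = - br y x) ∧
    (∀ x y z : A, J (α x) (α y) (br x z) = br (J x y z) (α (α x))) := by
  obtain rfl : br = fun x y ↦ commutatorBracket μ x y := funext₂ hbr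
  obtain rfl : J = homJacobiator (commutatorBracket μ) α := funext₃ hJ
  exact isHomMalcev_commutatorBracket (fun x y ↦ sub_eq_zero.mpr (hleft x y).symm)
    (fun x y ↦ sub_eq_zero.mpr (hright x y).symm) hmult

/-- The commutator bracket of a multiplicative Hom-alternative
algebra yields a Hom-Malcev algebra. -/
theorem commutator_of_hom_alternative_is_hom_malcev
    {K : Type*} [Field K] [CharZero K] {A : Type*} [AddCommGroup A] [Module K A]
    (μ : A →ₗ[K] A →ₗ[K] A) (α : A →ₗ[K] A)
    (hleft : ∀ x y : A, μ (α x) (μ x y) = μ (μ x x) (α y))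
    (hright : ∀ x y : A, μ (α x) (μ y y) = μ (μ x y) (α y))
    (hmult : ∀ x y : A, α (μ x y) = μ (α x) (α y))
    (br : A → A → A) (hbr : ∀ x y : A, br x y = μ x y - μ y x)
    (J : A → A → A → A)
    (hJ : ∀ x y z : A, J x y z = br (br x y) (α z) + br (br y z) (α x) + br (br z x) (α y)) :
    (∀ x y : A, br x y = - br y x) ∧
    (∀ x y z : A, J (α x) (α y) (br x z) = br (J x y z) (α (α x))) :=
  commutator_of_hom_alternative_is_hom_malcev_general μ α hleft hright hmult br hbr J hJ
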